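/- For every a ∈ V_K, with f_2 on V_{K+1} on the left-hand sides and f_2, α_1, ᾱ_1 on V_K on the right-hand sides: f_2(1a) = f_2(a) + ᾱ_1(a) and f_2((−1)a) = f_2(a) − α_1(a). -/
import Mathlib


open Finset MeasureTheory Filter

namespace CRW

/-- The vertex set `V_K = {-1,1}^K ⊆ ℤ^K`. -/
def V (K : ℕ) : Finset (Fin K → ℤ) :=
  Fintype.piFinset fun _ => ({-1, 1} : Finset ℤ)

/-- The nonzero entries of `b - a`, read in order of increasing index, alternate in sign,
the first nonzero entry being negative (the `c`-th nonzero entry, `0`-indexed, equals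
`2 * (-1)^(c+1)`; in particular all entries lie in `{-2,0,2}`). -/
def AltNeg (K : ℕ) (a b : Fin K → ℤ) : Prop :=
  ∀ i : Fin K, b i - a i ≠ 0 →
    b i - a i =
      2 * (-1 : ℤ) ^ (((Finset.univ.filter fun j : Fin K => j < i ∧ b j - a j ≠ 0)).card + 1)

/-- Same with the first nonzero entry positive. -/
def AltPos (K : ℕ) (a b : Fin K → ℤ) : Prop :=
  ∀ i : Fin K, b i - a i ≠ 0 →
    b i - a i =
      2 * (-1 : ℤ) ^ ((Finset.univ.filter fun j : Fin K => j < i ∧ b j - a j ≠ 0)).card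

instance (K : ℕ) (a b : Fin K → ℤ) : Decidable (AltNeg K a b) := by
  unfold AltNeg; infer_instance

instance (K : ℕ) (a b : Fin K → ℤ) : Decidable (AltPos K a b) := by
  unfold AltPos; infer_instance

/-- The set `E_K^+` of positive edges: couples `(a,b)` of vertices with `a ≠ b` whose
difference has nonzero entries of alternating signs, the first one negative; together
with one (positive) loop `(a,a)` at every vertex. -/
def Eplus (K : ℕ) : Finset ((Fin K → ℤ) × (Fin K → ℤ)) :=
  ((V K) ×ˢ (V K)).filter fun p => p.1 = p.2 ∨ AltNeg K p.1 p.2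

/-- The set `E_K^-` of negative edges, with one (negative) loop at every vertex. -/
def Eminus (K : ℕ) : Finset ((Fin K → ℤ) × (Fin K → ℤ)) :=
  ((V K) ×ˢ (V K)).filter fun p => p.1 = p.2 ∨ AltPos K p.1 p.2

/-- Type of signed edges: the Boolean records whether the edge is positive. -/
abbrev Edge (K : ℕ) := Bool × ((Fin K → ℤ) × (Fin K → ℤ))

/-- `E_K = E_K^+ ⊔ E_K^-` as a disjoint union (positive edges tagged `true`). -/
def EK (K : ℕ) : Finset (Edge K) :=
  (Eplus K).image (fun p => (true, p)) ∪ (Eminus K).image (fun p => (false, p))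

/-- The vector field `A`, equal to `+1` on `E_K^+` and `-1` on `E_K^-`. -/
noncomputable def A (K : ℕ) : Edge K → ℝ := fun e => if e.1 then 1 else -1

/-- `α_k(a)`: the number of `b` with `(a,b) ∈ E_K^+` differing from `a` in exactly `k`
coordinates. -/
def alphaK (K k : ℕ) (a : Fin K → ℤ) : ℕ :=
  ((V K).filter fun b =>
    (a, b) ∈ Eplus K ∧ (Finset.univ.filter fun i : Fin K => b i ≠ a i).card = k).card

/-- `ᾱ_k(a)`: the number of `b` with `(a,b) ∈ E_K^-` differing from `a` in exactly `k`
coordinates. -/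
def abarK (K k : ℕ) (a : Fin K → ℤ) : ℕ :=
  ((V K).filter fun b =>
    (a, b) ∈ Eminus K ∧ (Finset.univ.filter fun i : Fin K => b i ≠ a i).card = k).card

/-- `α_ev(a) = Σ_{k even} α_k(a)`. -/
def alphaEv (K : ℕ) (a : Fin K → ℤ) : ℕ :=
  ∑ k ∈ (Finset.range (K + 1)).filter (fun k => Even k), alphaK K k a

/-- `α_od(a) = Σ_{k odd} α_k(a)`. -/
def alphaOd (K : ℕ) (a : Fin K → ℤ) : ℕ :=
  ∑ k ∈ (Finset.range (K + 1)).filter (fun k => Odd k), alphaK K k a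

/-- `ᾱ_ev(a) = Σ_{k even} ᾱ_k(a)`. -/
def abarEv (K : ℕ) (a : Fin K → ℤ) : ℕ :=
  ∑ k ∈ (Finset.range (K + 1)).filter (fun k => Even k), abarK K k a

/-- `ᾱ_od(a) = Σ_{k odd} ᾱ_k(a)`. -/
def abarOd (K : ℕ) (a : Fin K → ℤ) : ℕ :=
  ∑ k ∈ (Finset.range (K + 1)).filter (fun k => Odd k), abarK K k a

/-- `ᾱ(a) = Σ_{k=0}^K ᾱ_k(a)`. -/
def abarTot (K : ℕ) (a : Fin K → ℤ) : ℕ := ∑ k ∈ Finset.range (K + 1), abarK K k a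

/-- `f_1(a) = Σ_i a_i`. -/
def f1 (K : ℕ) (a : Fin K → ℤ) : ℤ := ∑ i : Fin K, a i

/-- `f_2(a) = α_2(a) - ᾱ_2(a)`. -/
def f2 (K : ℕ) (a : Fin K → ℤ) : ℤ := (alphaK K 2 a : ℤ) - (abarK K 2 a : ℤ)

/-- `φ(a) = Σ_{(a,b) ∈ E_K^+} (f_2(b) - f_2(a))` (loops included; they contribute `0`). -/
def phi (K : ℕ) (a : Fin K → ℤ) : ℤ :=
  ∑ p ∈ (Eplus K).filter (fun p => p.1 = a), (f2 K p.2 - f2 K p.1)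

/-- `φ̄(a) = Σ_{(a,b) ∈ E_K^-} (f_2(b) - f_2(a))`. -/
def phibar (K : ℕ) (a : Fin K → ℤ) : ℤ :=
  ∑ p ∈ (Eminus K).filter (fun p => p.1 = a), (f2 K p.2 - f2 K p.1)

/-- The gradient vector field of a function `f` on the vertices:
`∇f(a,b) = f(b) - f(a)` (it vanishes on loops). -/
noncomputable def gradE (K : ℕ) (f : (Fin K → ℤ) → ℝ) : Edge K → ℝ := fun e => f e.2.2 - f e.2.1

/-- Divergence of a vector field at a vertex: the sum of its values over all edges of
`E_K` leaving that vertex, loops included. -/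
noncomputable def divE (K : ℕ) (S : Edge K → ℝ) (a : Fin K → ℤ) : ℝ :=
  ∑ e ∈ (EK K).filter (fun e => e.2.1 = a), S e

/-- Scalar product `⟨S,S'⟩ = (1/D_K) Σ_{e ∈ E_K} S(e) S'(e)` with `D_K = Card E_K`. -/
noncomputable def innerE (K : ℕ) (S S' : Edge K → ℝ) : ℝ :=
  (∑ e ∈ EK K, S e * S' e) / ((EK K).card : ℝ)

/-- A vector field on `G_K`: antisymmetric on non-loop edges (reversing a non-loop edge
of `E_K` yields again an edge of `E_K`, with the opposite sign), with opposite values on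
the two loops at each vertex. -/
def IsVectorField (K : ℕ) (S : Edge K → ℝ) : Prop :=
  (∀ e ∈ EK K, ∀ e' ∈ EK K, e.2.1 ≠ e.2.2 → e'.2.1 = e.2.2 → e'.2.2 = e.2.1 →
    S e = - S e') ∧
  (∀ a : Fin K → ℤ, (true, (a, a)) ∈ EK K → S (true, (a, a)) = - S (false, (a, a)))

/-- The state space `𝒮_K` of `K`-step walks in `ℤ`. -/
def SK (K : ℕ) : Set (Fin (K + 1) → ℤ) :=
  {z | ∀ i : Fin K, |z i.succ - z i.castSucc| = 1}

/-- `w` is a possible next position for the constrained walk at `z`. -/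
def Adjacent (K : ℕ) (z w : Fin (K + 1) → ℤ) : Prop :=
  w ∈ SK K ∧ ∀ i : Fin (K + 1), |w i - z i| = 1

/-- The shape map `δ(z) = (z⁽²⁾ - z⁽¹⁾, …, z⁽ᴷ⁺¹⁾ - z⁽ᴷ⁾)`. -/
def deltaS (K : ℕ) (z : Fin (K + 1) → ℤ) : Fin K → ℤ :=
  fun i => z i.succ - z i.castSucc


section Aux

variable {K : ℕ}

lemma count_cons (a b : Fin K → ℤ) (x y : ℤ) (i : Fin K) :
    ((Finset.univ.filter fun j : Fin (K+1) =>
        j < i.succ ∧ (Fin.cons (α := fun _ => ℤ) y b) j - (Fin.cons (α := fun _ => ℤ) x a) j ≠ 0)).card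
      = (if y - x ≠ 0 then 1 else 0)
        + ((Finset.univ.filter fun j : Fin K => j < i ∧ b j - a j ≠ 0)).card := by
  rw [Finset.card_filter, Finset.card_filter, Fin.sum_univ_succ]
  simp [Fin.succ_lt_succ_iff, Fin.succ_pos]

lemma diffcard_cons (a b : Fin K → ℤ) (x y : ℤ) :
    (Finset.univ.filter fun i : Fin (K+1) =>
        (Fin.cons (α := fun _ => ℤ) y b) i ≠ (Fin.cons (α := fun _ => ℤ) x a) i).card
      = (if y ≠ x then 1 else 0)
        + (Finset.univ.filter fun i : Fin K => b i ≠ a i).card := by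
  rw [Finset.card_filter, Finset.card_filter, Fin.sum_univ_succ]
  simp

lemma altNeg_cons_same (a b : Fin K → ℤ) (x : ℤ) :
    AltNeg (K+1) (Fin.cons x a) (Fin.cons x b) ↔ AltNeg K a b := by
  constructor
  · intro h i hi
    have := h i.succ (by simpa using hi)
    rw [count_cons] at this
    simpa using this
  · intro h i
    induction i using Fin.cases with
    | zero => simp
    | succ i =>
      intro hi
      rw [count_cons]
      simpa using h i (by simpa using hi)

lemma altPos_cons_same (a b : Fin K → ℤ) (x : ℤ) :
    AltPos (K+1) (Fin.cons x a) (Fin.cons x b) ↔ AltPos K a b := by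
  constructor
  · intro h i hi
    have := h i.succ (by simpa using hi)
    rw [count_cons] at this
    simpa using this
  · intro h i
    induction i using Fin.cases with
    | zero => simp
    | succ i =>
      intro hi
      rw [count_cons]
      simpa using h i (by simpa using hi)

lemma altNeg_cons_flip (a b : Fin K → ℤ) :
    AltNeg (K+1) (Fin.cons 1 a) (Fin.cons (-1) b) ↔ AltPos K a b := by
  constructor
  · intro h i hi
    have := h i.succ (by simpa using hi)
    rw [count_cons] at this
    simp only [Fin.cons_succ] at this
    norm_num at this
    rw [this, pow_add]
    ring_nf
  · intro h i
    induction i using Fin.cases with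
    | zero =>
      intro _
      simp only [Fin.cons_zero]
      rw [Finset.filter_eq_empty_iff.2 (by intro j _; simp [Fin.not_lt_zero j])]
      norm_num
    | succ i =>
      intro hi
      rw [count_cons]
      simp only [Fin.cons_succ] at hi ⊢
      rw [h i hi]
      norm_num
      rw [pow_add]
      ring_nf

lemma not_altPos_flip (a b : Fin K → ℤ) :
    ¬ AltPos (K+1) (Fin.cons 1 a) (Fin.cons (-1) b) := by
  intro h
  have := h 0 (by norm_num)
  rw [Finset.filter_eq_empty_iff.2 (by intro j _; simp [Fin.not_lt_zero j])] at this
  norm_num at this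

lemma neg_cons (a : Fin K → ℤ) (x : ℤ) :
    -(Fin.cons (α := fun _ => ℤ) x a) = Fin.cons (α := fun _ => ℤ) (-x) (-a) := by
  funext i
  induction i using Fin.cases <;> simp

lemma altNeg_neg_iff (a b : Fin K → ℤ) :
    AltNeg K (-a) (-b) ↔ AltPos K a b := by
  have key : ∀ i : Fin K, (-b) i - (-a) i = -(b i - a i) := by intro i; simp; ring
  have hfilt : ∀ i : Fin K, (Finset.univ.filter fun j : Fin K => j < i ∧ (-b) j - (-a) j ≠ 0)
      = (Finset.univ.filter fun j : Fin K => j < i ∧ b j - a j ≠ 0) := by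
    intro i
    apply Finset.filter_congr
    intro j _
    have := key j
    constructor
    · rintro ⟨h1, h2⟩; exact ⟨h1, by omega⟩
    · rintro ⟨h1, h2⟩; exact ⟨h1, by omega⟩
  constructor
  · intro h i hi
    have := h i (by have := key i; omega)
    rw [key, hfilt] at this
    have h2 : b i - a i = -(2 * (-1:ℤ) ^ ((Finset.univ.filter fun j : Fin K => j < i ∧ b j - a j ≠ 0).card + 1)) := by omega
    rw [h2, pow_add]; ring
  · intro h i hi
    have hi' : b i - a i ≠ 0 := by have := key i; omega
    rw [hfilt, key, h i hi', pow_add]; ring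

lemma neg_mem_V {a : Fin K → ℤ} : -a ∈ V K ↔ a ∈ V K := by
  simp only [V, Fintype.mem_piFinset]
  constructor <;> intro h i <;> have := h i <;> simp at this ⊢ <;> omega

lemma cons_mem_V {a : Fin K → ℤ} {x : ℤ} :
    Fin.cons (α := fun _ => ℤ) x a ∈ V (K+1) ↔ (x = -1 ∨ x = 1) ∧ a ∈ V K := by
  simp only [V, Fintype.mem_piFinset]
  constructor
  · intro h
    refine ⟨by have := h 0; simpa using this, fun i => by have := h i.succ; simpa using this⟩
  · rintro ⟨hx, h⟩ i
    induction i using Fin.cases with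
    | zero => simpa using hx
    | succ i => simpa using h i

lemma mem_Eplus {a b : Fin K → ℤ} :
    (a, b) ∈ Eplus K ↔ a ∈ V K ∧ b ∈ V K ∧ (a = b ∨ AltNeg K a b) := by
  simp [Eplus, Finset.mem_filter, Finset.mem_product, and_assoc]

lemma mem_Eminus {a b : Fin K → ℤ} :
    (a, b) ∈ Eminus K ↔ a ∈ V K ∧ b ∈ V K ∧ (a = b ∨ AltPos K a b) := by
  simp [Eminus, Finset.mem_filter, Finset.mem_product, and_assoc]

lemma diff_filter_neg (a b : Fin K → ℤ) :
    (Finset.univ.filter fun i : Fin K => (-b) i ≠ a i)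
      = (Finset.univ.filter fun i : Fin K => b i ≠ (-a) i) := by
  apply Finset.filter_congr
  intro i _
  simp only [Pi.neg_apply, ne_eq]
  omega

lemma diff_filter_negneg (a b : Fin K → ℤ) :
    (Finset.univ.filter fun i : Fin K => (-b) i ≠ (-a) i)
      = (Finset.univ.filter fun i : Fin K => b i ≠ a i) := by
  apply Finset.filter_congr
  intro i _
  simp only [Pi.neg_apply, ne_eq]
  omega

lemma alphaK_neg (k : ℕ) (a : Fin K → ℤ) : alphaK K k (-a) = abarK K k a := by
  rw [alphaK, abarK]
  refine Finset.card_bij' (fun b _ => -b) (fun b _ => -b) ?_ ?_ ?_ ?_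
  · intro b hb
    rw [Finset.mem_filter] at hb ⊢
    obtain ⟨hbV, hE, hc⟩ := hb
    rw [mem_Eplus] at hE
    refine ⟨neg_mem_V.2 hbV, mem_Eminus.2 ⟨neg_mem_V.1 hE.1, neg_mem_V.2 hbV, ?_⟩, ?_⟩
    · rcases hE.2.2 with h | h
      · left; subst h; simp
      · right; rw [← altNeg_neg_iff, neg_neg]; exact h
    · rw [diff_filter_neg]; exact hc
  · intro b hb
    rw [Finset.mem_filter] at hb ⊢
    obtain ⟨hbV, hE, hc⟩ := hb
    rw [mem_Eminus] at hE
    refine ⟨neg_mem_V.2 hbV, mem_Eplus.2 ⟨neg_mem_V.2 hE.1, neg_mem_V.2 hbV, ?_⟩, ?_⟩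
    · rcases hE.2.2 with h | h
      · left; subst h; simp
      · right; exact (altNeg_neg_iff a b).2 h
    · rw [diff_filter_negneg]; exact hc
  · intro b _; simp
  · intro b _; simp

lemma cons_ne_cons_of_sign (a c : Fin K → ℤ) :
    Fin.cons (α := fun _ => ℤ) 1 a ≠ Fin.cons (α := fun _ => ℤ) (-1) c := by
  intro h
  have := congrFun h 0
  simp at this

lemma key1 {a : Fin K → ℤ} (ha : a ∈ V K) :
    alphaK (K+1) 2 (Fin.cons 1 a) = alphaK K 2 a + abarK K 1 a := by
  have ha' : Fin.cons (α := fun _ => ℤ) 1 a ∈ V (K+1) := cons_mem_V.2 ⟨Or.inr rfl, ha⟩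
  have hset : ((V (K+1)).filter fun b =>
      ((Fin.cons (α := fun _ => ℤ) 1 a, b) ∈ Eplus (K+1)) ∧
        (Finset.univ.filter fun i : Fin (K+1) => b i ≠ Fin.cons (α := fun _ => ℤ) 1 a i).card = 2)
    = (((V K).filter fun c => ((a, c) ∈ Eplus K) ∧
          (Finset.univ.filter fun i : Fin K => c i ≠ a i).card = 2).image
        (Fin.cons (α := fun _ => ℤ) 1))
      ∪ (((V K).filter fun c => ((a, c) ∈ Eminus K) ∧
          (Finset.univ.filter fun i : Fin K => c i ≠ a i).card = 1).image
        (Fin.cons (α := fun _ => ℤ) (-1))) := by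
    ext b
    simp only [Finset.mem_filter, Finset.mem_union, Finset.mem_image]
    constructor
    · rintro ⟨hbV, hE, hcard⟩
      have hb : Fin.cons (α := fun _ => ℤ) (b 0) (Fin.tail b) = b := Fin.cons_self_tail b
      have hb0 : b 0 = -1 ∨ b 0 = 1 := (cons_mem_V.1 (hb ▸ hbV)).1
      have htV : Fin.tail b ∈ V K := (cons_mem_V.1 (hb ▸ hbV)).2
      rw [mem_Eplus] at hE
      rcases hb0 with h0 | h0
      · right
        refine ⟨Fin.tail b, ⟨htV, ?_, ?_⟩, by rw [← h0]; exact hb⟩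
        · rw [mem_Eminus]
          refine ⟨ha, htV, Or.inr ?_⟩
          rcases hE.2.2 with h | h
          · exact absurd (h.trans (by rw [← h0]; exact hb.symm)) (cons_ne_cons_of_sign a (Fin.tail b))
          · rw [← hb, h0] at h
            exact (altNeg_cons_flip a (Fin.tail b)).1 h
        · rw [← hb, h0, diffcard_cons] at hcard
          norm_num at hcard
          linarith
      · left
        refine ⟨Fin.tail b, ⟨htV, ?_, ?_⟩, by rw [← h0]; exact hb⟩
        · rw [mem_Eplus]
          refine ⟨ha, htV, ?_⟩
          rcases hE.2.2 with h | h
          · left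
            have := congrFun (h.trans (show b = Fin.cons (α := fun _ => ℤ) 1 (Fin.tail b) by rw [← h0]; exact hb.symm))
            funext i
            simpa using this i.succ
          · right
            rw [← hb, h0] at h
            exact (altNeg_cons_same a (Fin.tail b) 1).1 h
        · rw [← hb, h0, diffcard_cons] at hcard
          norm_num at hcard
          exact hcard
    · rintro (⟨c, ⟨hcV, hcE, hccard⟩, rfl⟩ | ⟨c, ⟨hcV, hcE, hccard⟩, rfl⟩)
      · refine ⟨cons_mem_V.2 ⟨Or.inr rfl, hcV⟩, mem_Eplus.2 ⟨ha', cons_mem_V.2 ⟨Or.inr rfl, hcV⟩, ?_⟩, ?_⟩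
        · rcases (mem_Eplus.1 hcE).2.2 with h | h
          · left; rw [h]
          · exact Or.inr ((altNeg_cons_same a c 1).2 h)
        · rw [diffcard_cons, hccard]
          norm_num
      · have hac : AltPos K a c := by
          rcases (mem_Eminus.1 hcE).2.2 with h | h
          · exfalso; rw [← h] at hccard; simp at hccard
          · exact h
        refine ⟨cons_mem_V.2 ⟨Or.inl rfl, hcV⟩, mem_Eplus.2 ⟨ha', cons_mem_V.2 ⟨Or.inl rfl, hcV⟩,
            Or.inr ((altNeg_cons_flip a c).2 hac)⟩, ?_⟩
        rw [diffcard_cons, hccard]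
        norm_num
  have hdisj : Disjoint
      (((V K).filter fun c => ((a, c) ∈ Eplus K) ∧
          (Finset.univ.filter fun i : Fin K => c i ≠ a i).card = 2).image
        (Fin.cons (α := fun _ => ℤ) 1))
      (((V K).filter fun c => ((a, c) ∈ Eminus K) ∧
          (Finset.univ.filter fun i : Fin K => c i ≠ a i).card = 1).image
        (Fin.cons (α := fun _ => ℤ) (-1))) := by
    rw [Finset.disjoint_left]
    rintro b hb1 hb2
    rw [Finset.mem_image] at hb1 hb2
    obtain ⟨c1, _, h1⟩ := hb1
    obtain ⟨c2, _, h2⟩ := hb2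
    exact cons_ne_cons_of_sign c1 c2 (h1.trans h2.symm)
  rw [alphaK, alphaK, abarK, hset, Finset.card_union_of_disjoint hdisj,
    Finset.card_image_of_injective _ (Fin.cons_right_injective _),
    Finset.card_image_of_injective _ (Fin.cons_right_injective _)]

lemma key2 {a : Fin K → ℤ} (ha : a ∈ V K) :
    abarK (K+1) 2 (Fin.cons 1 a) = abarK K 2 a := by
  have ha' : Fin.cons (α := fun _ => ℤ) 1 a ∈ V (K+1) := cons_mem_V.2 ⟨Or.inr rfl, ha⟩
  have hset : ((V (K+1)).filter fun b =>
      ((Fin.cons (α := fun _ => ℤ) 1 a, b) ∈ Eminus (K+1)) ∧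
        (Finset.univ.filter fun i : Fin (K+1) => b i ≠ Fin.cons (α := fun _ => ℤ) 1 a i).card = 2)
    = (((V K).filter fun c => ((a, c) ∈ Eminus K) ∧
          (Finset.univ.filter fun i : Fin K => c i ≠ a i).card = 2).image
        (Fin.cons (α := fun _ => ℤ) 1)) := by
    ext b
    simp only [Finset.mem_filter, Finset.mem_image]
    constructor
    · rintro ⟨hbV, hE, hcard⟩
      have hb : Fin.cons (α := fun _ => ℤ) (b 0) (Fin.tail b) = b := Fin.cons_self_tail b
      have hb0 : b 0 = -1 ∨ b 0 = 1 := (cons_mem_V.1 (hb ▸ hbV)).1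
      have htV : Fin.tail b ∈ V K := (cons_mem_V.1 (hb ▸ hbV)).2
      rw [mem_Eminus] at hE
      rcases hb0 with h0 | h0
      · exfalso
        rcases hE.2.2 with h | h
        · exact cons_ne_cons_of_sign a (Fin.tail b)
            (h.trans (by rw [← h0]; exact hb.symm))
        · rw [← hb, h0] at h
          exact not_altPos_flip a (Fin.tail b) h
      · refine ⟨Fin.tail b, ⟨htV, ?_, ?_⟩, by rw [← h0]; exact hb⟩
        · rw [mem_Eminus]
          refine ⟨ha, htV, ?_⟩
          rcases hE.2.2 with h | h
          · left
            have := congrFun (h.trans (show b = Fin.cons (α := fun _ => ℤ) 1 (Fin.tail b) by rw [← h0]; exact hb.symm))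
            funext i
            simpa using this i.succ
          · right
            rw [← hb, h0] at h
            exact (altPos_cons_same a (Fin.tail b) 1).1 h
        · rw [← hb, h0, diffcard_cons] at hcard
          norm_num at hcard
          exact hcard
    · rintro ⟨c, ⟨hcV, hcE, hccard⟩, rfl⟩
      refine ⟨cons_mem_V.2 ⟨Or.inr rfl, hcV⟩, mem_Eminus.2 ⟨ha', cons_mem_V.2 ⟨Or.inr rfl, hcV⟩, ?_⟩, ?_⟩
      · rcases (mem_Eminus.1 hcE).2.2 with h | h
        · left; rw [h]
        · exact Or.inr ((altPos_cons_same a c 1).2 h)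
      · rw [diffcard_cons, hccard]
        norm_num
  rw [abarK, abarK, hset,
    Finset.card_image_of_injective _ (Fin.cons_right_injective _)]

end Aux

end CRW

/-- Recursion for `f₂` under prepending a coordinate: `f₂(1a) = f₂(a) + ᾱ₁(a)` and
`f₂((-1)a) = f₂(a) - α₁(a)`. -/
theorem statement11 (K : ℕ) (hK : 1 ≤ K) (a : Fin K → ℤ) (ha : a ∈ CRW.V K) :
    CRW.f2 (K + 1) (Fin.cons 1 a) = CRW.f2 K a + (CRW.abarK K 1 a : ℤ) ∧
    CRW.f2 (K + 1) (Fin.cons (-1) a) = CRW.f2 K a - (CRW.alphaK K 1 a : ℤ) := by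
  have ha2 : -a ∈ CRW.V K := CRW.neg_mem_V.2 ha
  have hrw : (Fin.cons (α := fun _ => ℤ) (-1) a) = -(Fin.cons (α := fun _ => ℤ) 1 (-a)) := by
    rw [CRW.neg_cons, neg_neg]
  constructor
  · rw [CRW.f2, CRW.f2, CRW.key1 ha, CRW.key2 ha]
    push_cast
    ring
  · have h1 : CRW.alphaK (K+1) 2 (Fin.cons (-1) a) = CRW.alphaK K 2 a := by
      rw [hrw, CRW.alphaK_neg, CRW.key2 ha2, ← CRW.alphaK_neg 2 (-a), neg_neg]
    have h2 : CRW.abarK (K+1) 2 (Fin.cons (-1) a) = CRW.abarK K 2 a + CRW.alphaK K 1 a := by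
      rw [hrw, ← CRW.alphaK_neg, neg_neg, CRW.key1 ha2, CRW.alphaK_neg,
        ← CRW.alphaK_neg 1 (-a), neg_neg]
    rw [CRW.f2, CRW.f2, h1, h2]
    push_cast
    ring
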